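/- With ω_{g,n} as above (ω_{g,n}(1^{⊗a}, H̃^{⊗b}) = 2^g φ^{(g−1+b)/2} if g−1+b even, else 0), the separating gluing identity holds: for g = g₁+g₂ and any insertions v_1,…,v_n split among the two factors, Σ_{μ,ν} ω_{g₁,n₁+1}(v's, e_μ) η^{μν} ω_{g₂,n₂+1}(v's, e_ν) = ω_{g,n}(v_1,…,v_n). -/

import Mathlib

/-!
Contracting with `η^{μν} = [[0,1],[1,0]]` pairs an extra `1` on one side with an extra `H̃` on
the other. At most one of the two resulting products is nonzero, according to which of `g₁ + a`,
`g₂ + b` is odd; when one is, the powers of `2` and of `√φ` simply add up to those of genus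
`g₁ + g₂`, and when neither is, the total parity makes the right-hand side vanish too.
-/

/-- The TQFT underlying equivariant Gromov–Witten theory of `ℙ¹`: its value on `b`
insertions of `H̃` in genus `g` is `2^g (√φ)^{g−1+b}` if `g−1+b` is even, else `0`. -/
noncomputable def tqftP1 {K : Type*} [CommRing K] (s : K) (g b : ℕ) : K :=
  if Odd (g + b) then 2 ^ g * s ^ (g + b - 1) else 0

/-- The number of insertions of `H̃` among the basis vectors `(e 0, e 1) = (1, H̃)`. -/
def countH {n : ℕ} (v : Fin n → Fin 2) : ℕ :=
  (Finset.univ.filter fun i => v i = 1).card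

lemma countH_snoc {n : ℕ} (v : Fin n → Fin 2) (μ : Fin 2) :
    countH (Fin.snoc v μ) = countH v + if μ = 1 then 1 else 0 := by
  simp only [countH, Finset.card_filter, Fin.sum_univ_castSucc, Fin.snoc_castSucc, Fin.snoc_last]

section
variable {K : Type*} [CommRing K] (s : K)

lemma tqftP1_eq_zero_of_even {g b : ℕ} (h : Even (g + b)) : tqftP1 s g b = 0 :=
  if_neg (Nat.not_odd_iff_even.2 h)

lemma tqftP1_mul_tqftP1_succ (g₁ g₂ a b : ℕ) :
    tqftP1 s g₁ a * tqftP1 s g₂ (b + 1)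
      = if Odd (g₁ + a) ∧ Even (g₂ + b) then tqftP1 s (g₁ + g₂) (a + b) else 0 := by
  by_cases h₁ : Odd (g₁ + a)
  · by_cases h₂ : Even (g₂ + b)
    · have hsucc : Odd (g₂ + (b + 1)) := by rw [← add_assoc]; exact h₂.add_one
      have hsum : Odd (g₁ + g₂ + (a + b)) := by
        rw [show g₁ + g₂ + (a + b) = g₁ + a + (g₂ + b) by ring]; exact h₁.add_even h₂
      rw [tqftP1, tqftP1, tqftP1, if_pos h₁, if_pos hsucc, if_pos ⟨h₁, h₂⟩, if_pos hsum,
        show g₁ + g₂ + (a + b) - 1 = (g₁ + a - 1) + (g₂ + (b + 1) - 1) by grind]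
      ring
    · have hsucc : Even (g₂ + (b + 1)) := by
        rw [← add_assoc]; exact (Nat.not_even_iff_odd.1 h₂).add_one
      rw [tqftP1_eq_zero_of_even s hsucc, mul_zero, if_neg (by tauto)]
  · rw [tqftP1_eq_zero_of_even s (Nat.not_odd_iff_even.1 h₁), zero_mul, if_neg (by tauto)]

lemma tqftP1_glue (g₁ g₂ a b : ℕ) :
    tqftP1 s g₁ a * tqftP1 s g₂ (b + 1) + tqftP1 s g₁ (a + 1) * tqftP1 s g₂ b
      = tqftP1 s (g₁ + g₂) (a + b) := by
  rw [mul_comm (tqftP1 s g₁ (a + 1)), tqftP1_mul_tqftP1_succ, tqftP1_mul_tqftP1_succ,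
    add_comm g₂ g₁, add_comm b a]
  have hsum : g₁ + g₂ + (a + b) = g₁ + a + (g₂ + b) := by ring
  rcases Nat.even_or_odd (g₁ + a) with h₁ | h₁ <;> rcases Nat.even_or_odd (g₂ + b) with h₂ | h₂
  · rw [tqftP1_eq_zero_of_even s (hsum ▸ h₁.add h₂)]; simp [h₁]
  · simp [h₁, h₂]
  · simp [h₁, h₂]
  · rw [tqftP1_eq_zero_of_even s (hsum ▸ h₁.add_odd h₂)]; simp [h₁, h₂]

end

theorem tqft_glue_separating_general {K : Type*} [CommRing K] (s : K)
    (g₁ g₂ n₁ n₂ : ℕ)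
    (v : Fin n₁ → Fin 2) (u : Fin n₂ → Fin 2)
    (J : Matrix (Fin 2) (Fin 2) K) (hJ : J = !![0, 1; 1, 0]) :
    ∑ μ : Fin 2, ∑ ν : Fin 2,
        tqftP1 s g₁ (countH (Fin.snoc v μ)) * J μ ν * tqftP1 s g₂ (countH (Fin.snoc u ν))
      = tqftP1 s (g₁ + g₂) (countH v + countH u) := by
  subst hJ
  simp only [countH_snoc, Fin.isValue, Matrix.of_apply, Matrix.cons_val', Matrix.cons_val_fin_one,
    Fin.sum_univ_two, Matrix.cons_val_zero, zero_ne_one, ↓reduceIte, add_zero, Matrix.cons_val_one,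
    mul_zero, zero_mul, mul_one, zero_add]
  exact tqftP1_glue s g₁ g₂ (countH v) (countH u)

/-- Separating gluing identity for the TQFT `ω` with
`ω_{g,n}(1^{⊗a}, H̃^{⊗b}) = 2^g φ^{(g−1+b)/2}` (if `g−1+b` even, else `0`):
for `g = g₁ + g₂` and insertions split among the two factors,
`Σ_{μ,ν} ω_{g₁,n₁+1}(v, e_μ) η^{μν} ω_{g₂,n₂+1}(u, e_ν) = ω_{g,n₁+n₂}(v, u)` with
`η^{μν} = [[0,1],[1,0]]`, under the stability conditions `2gᵢ−2+nᵢ+1 > 0`. -/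
theorem tqft_glue_separating {K : Type*} [CommRing K] (s : K)
    (g₁ g₂ n₁ n₂ : ℕ) (h₁ : 2 < 2 * g₁ + n₁ + 1) (h₂ : 2 < 2 * g₂ + n₂ + 1)
    (v : Fin n₁ → Fin 2) (u : Fin n₂ → Fin 2)
    (J : Matrix (Fin 2) (Fin 2) K) (hJ : J = !![0, 1; 1, 0]) :
    ∑ μ : Fin 2, ∑ ν : Fin 2,
        tqftP1 s g₁ (countH (Fin.snoc v μ)) * J μ ν * tqftP1 s g₂ (countH (Fin.snoc u ν))
      = tqftP1 s (g₁ + g₂) (countH v + countH u) :=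
  tqft_glue_separating_general s g₁ g₂ n₁ n₂ v u J hJ
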